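/- Let f ∈ H^p(𝔹) for some 0 < p < ∞. Then the symmetrization f^s = f * f^c belongs to H^{p/2}(𝔹). Moreover if f ∈ H^∞(𝔹), then f^s ∈ H^∞(𝔹) with ‖f^s‖_∞ ≤ ‖f‖_∞². -/

import Mathlib

open MeasureTheory Metric Filter Set
open scoped Topology ENNReal Quaternion

noncomputable section

/-- The 2-sphere of imaginary units in the quaternions. -/
def QSphere : Set ℍ[ℝ] := {q | q ^ 2 = -1}

/-- The open unit ball of the quaternions. -/
def QBall : Set ℍ[ℝ] := Metric.ball 0 1

/-- The point `x + yI` of the slice `L_I = ℝ + ℝI`. -/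
def slicePt (I : ℍ[ℝ]) (x y : ℝ) : ℍ[ℝ] := (x : ℍ[ℝ]) + y • I

/-- A function `f : 𝔹 → ℍ` (given on all of `ℍ`, its values outside the unit ball being
irrelevant) is slice regular on the unit ball if, for every imaginary unit `I`, the
restriction of `f` to the slice `𝔹_I` is (real-)differentiable and satisfies the
Cauchy–Riemann equation `∂f/∂x + I ∂f/∂y = 0`. -/
def SliceRegular (f : ℍ[ℝ] → ℍ[ℝ]) : Prop :=
  ∀ I ∈ QSphere, ∀ p : ℝ × ℝ, p.1 ^ 2 + p.2 ^ 2 < 1 →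
    DifferentiableAt ℝ (fun w : ℝ × ℝ => f (slicePt I w.1 w.2)) p ∧
    fderiv ℝ (fun w : ℝ × ℝ => f (slicePt I w.1 w.2)) p (1, 0)
      + I * fderiv ℝ (fun w : ℝ × ℝ => f (slicePt I w.1 w.2)) p (0, 1) = 0

/-- The point `r e^{Iθ}` of the slice `L_I`. -/
def circlePt (I : ℍ[ℝ]) (r θ : ℝ) : ℍ[ℝ] := slicePt I (r * Real.cos θ) (r * Real.sin θ)

/-- The integral mean `M_p(f_I, r) = ((1/2π) ∫ |f(re^{Iθ})|^p dθ)^{1/p}`. -/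
def sliceMp (f : ℍ[ℝ] → ℍ[ℝ]) (I : ℍ[ℝ]) (p r : ℝ) : ℝ≥0∞ :=
  ENNReal.ofReal
    (((1 / (2 * Real.pi)) * ∫ θ in (0:ℝ)..(2 * Real.pi), ‖f (circlePt I r θ)‖ ^ p) ^ (1 / p))

/-- The slice `p`-norm `‖f_I‖_p = lim_{r→1⁻} M_p(f_I, r)`; since `r ↦ M_p(f_I,r)` is
increasing for slice regular `f`, the limit equals the supremum over `r ∈ [0,1)`. -/
def sliceNorm (f : ℍ[ℝ] → ℍ[ℝ]) (I : ℍ[ℝ]) (p : ℝ) : ℝ≥0∞ :=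
  ⨆ r ∈ Set.Ico (0:ℝ) 1, sliceMp f I p r

/-- The slice `p`-norm for an extended exponent `p ∈ (0,∞]`; for `p = ∞` it is the sup norm
on the slice. -/
def sliceNormE (f : ℍ[ℝ] → ℍ[ℝ]) (I : ℍ[ℝ]) (p : ℝ≥0∞) : ℝ≥0∞ :=
  if p = ⊤ then
    ⨆ (w : ℝ × ℝ) (_ : w.1 ^ 2 + w.2 ^ 2 < 1), ENNReal.ofReal ‖f (slicePt I w.1 w.2)‖
  else sliceNorm f I p.toReal

/-- The quaternionic Hardy norm `‖f‖_p = sup_{I∈𝕊} ‖f_I‖_p` (for `p = ∞` this is the sup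
norm on the ball). -/
def hardyNorm (f : ℍ[ℝ] → ℍ[ℝ]) (p : ℝ≥0∞) : ℝ≥0∞ :=
  ⨆ I ∈ QSphere, sliceNormE f I p

/-- Membership in the quaternionic Hardy space `H^p(𝔹)`. -/
def MemHp (f : ℍ[ℝ] → ℍ[ℝ]) (p : ℝ≥0∞) : Prop :=
  SliceRegular f ∧ hardyNorm f p < ⊤

/-- The embedding of `ℂ` onto the slice `L_I`. -/
def sliceEmbed (I : ℍ[ℝ]) (z : ℂ) : ℍ[ℝ] := slicePt I z.re z.im

/-- The integral mean of a complex function on the circle of radius `r`. -/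
def cMp (F : ℂ → ℂ) (p r : ℝ) : ℝ≥0∞ :=
  ENNReal.ofReal
    (((1 / (2 * Real.pi)) * ∫ θ in (0:ℝ)..(2 * Real.pi),
      ‖F (r * Complex.exp (θ * Complex.I))‖ ^ p) ^ (1 / p))

/-- The classical Hardy norm of a complex function on the unit disc, `0 < p ≤ ∞`. -/
def cHardyNorm (F : ℂ → ℂ) (p : ℝ≥0∞) : ℝ≥0∞ :=
  if p = ⊤ then ⨆ z ∈ Metric.ball (0:ℂ) 1, ENNReal.ofReal ‖F z‖
  else ⨆ r ∈ Set.Ico (0:ℝ) 1, cMp F p.toReal r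

/-- Membership in the classical complex Hardy space `H^p` of the unit disc. -/
def MemCHp (F : ℂ → ℂ) (p : ℝ≥0∞) : Prop :=
  DifferentiableOn ℂ F (Metric.ball 0 1) ∧ cHardyNorm F p < ⊤

open scoped ComplexConjugate

open Classical in
/-- The pointwise formula for the regular `*`-product of two slice regular functions:
`(f*g)(q) = f(q)·g(f(q)⁻¹ q f(q))` if `f(q) ≠ 0`, and `0` otherwise. -/
def starProd (h g : ℍ[ℝ] → ℍ[ℝ]) : ℍ[ℝ] → ℍ[ℝ] :=
  fun q => if h q = 0 then 0 else h q * g ((h q)⁻¹ * q * h q)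


namespace QAux
open scoped RealInnerProductSpace
open Quaternion

lemma mem_qsphere_iff {I : ℍ[ℝ]} : I ∈ QSphere ↔ I * I = -1 := by
  simp [QSphere, sq]

lemma re_eq_zero {I : ℍ[ℝ]} (hI : I ∈ QSphere) : I.re = 0 := by
  rw [mem_qsphere_iff] at hI
  have h1 := congrArg QuaternionAlgebra.re hI
  have h2 := congrArg QuaternionAlgebra.imI hI
  have h3 := congrArg QuaternionAlgebra.imJ hI
  have h4 := congrArg QuaternionAlgebra.imK hI
  simp [Quaternion.re_mul, Quaternion.imI_mul, Quaternion.imJ_mul, Quaternion.imK_mul] at h1 h2 h3 h4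
  by_contra hre
  have hbI : I.imI = 0 := by
    have h2' : I.re * I.imI = 0 := by linear_combination h2 / 2
    exact (mul_eq_zero.1 h2').resolve_left hre
  have hbJ : I.imJ = 0 := by
    have h3' : I.re * I.imJ = 0 := by linear_combination h3 / 2
    exact (mul_eq_zero.1 h3').resolve_left hre
  have hbK : I.imK = 0 := by
    have h4' : I.re * I.imK = 0 := by linear_combination h4 / 2
    exact (mul_eq_zero.1 h4').resolve_left hre
  rw [hbI, hbJ, hbK] at h1
  nlinarith [sq_nonneg I.re]

lemma normSq_eq_one {I : ℍ[ℝ]} (hI : I ∈ QSphere) : normSq I = 1 := by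
  have hre := re_eq_zero hI
  have h := mem_qsphere_iff.1 hI
  have h1 := congrArg QuaternionAlgebra.re h
  simp [Quaternion.re_mul, hre] at h1
  rw [normSq_def']
  nlinarith [h1]

lemma norm_eq_one {I : ℍ[ℝ]} (hI : I ∈ QSphere) : ‖I‖ = 1 := by
  have h := Quaternion.normSq_eq_norm_mul_self I
  rw [normSq_eq_one hI] at h
  nlinarith [norm_nonneg I]

lemma star_eq_neg' {I : ℍ[ℝ]} (hI : I ∈ QSphere) : star I = -I :=
  Quaternion.star_eq_neg.2 (re_eq_zero hI)

lemma inv_eq_neg {I : ℍ[ℝ]} (hI : I ∈ QSphere) : I⁻¹ = -I := by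
  have h := mem_qsphere_iff.1 hI
  exact inv_eq_of_mul_eq_one_right (by rw [mul_neg, h]; simp)

lemma mem_qsphere_of (v : ℍ[ℝ]) (hre : v.re = 0) (hn : ‖v‖ = 1) : v ∈ QSphere := by
  rw [mem_qsphere_iff]
  have hs : star v = -v := Quaternion.star_eq_neg.2 hre
  have h := Quaternion.self_mul_star v
  rw [hs, mul_neg] at h
  have hnsq : normSq v = 1 := by
    have := Quaternion.normSq_eq_norm_mul_self v; rw [hn] at this; simpa using this
  rw [hnsq] at h
  simpa [neg_eq_iff_eq_neg] using h



open Quaternion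
variable {I : ℍ[ℝ]}

lemma inner_def' (a b : ℍ[ℝ]) : ⟪a, b⟫ = (a * star b).re := Quaternion.inner_def a b

lemma re_mul_comm (a b : ℍ[ℝ]) : (a * b).re = (b * a).re := by
  simp [Quaternion.re_mul]; ring_nf

lemma inner_coe_left (c : ℝ) (v : ℍ[ℝ]) : ⟪(c : ℍ[ℝ]), v⟫ = c * v.re := by
  rw [inner_def']
  simp [Quaternion.coe_mul_eq_smul]

lemma slicePt_re (hI : I ∈ QSphere) (x y : ℝ) : (slicePt I x y).re = x := by
  simp [slicePt, re_eq_zero hI]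

lemma norm_slicePt_sq (hI : I ∈ QSphere) (x y : ℝ) : ‖slicePt I x y‖ ^ 2 = x ^ 2 + y ^ 2 := by
  have h := norm_add_sq_real (x : ℍ[ℝ]) (y • I)
  have hinner : ⟪(x : ℍ[ℝ]), y • I⟫ = 0 := by
    rw [real_inner_smul_right, inner_coe_left, re_eq_zero hI]; ring
  rw [hinner] at h
  simp only [slicePt, h, norm_smul, Quaternion.norm_coe, norm_eq_one hI]
  simp [Real.norm_eq_abs, mul_pow, sq_abs]


lemma slicePt_mem_ball (hI : I ∈ QSphere) {x y : ℝ} (h : x ^ 2 + y ^ 2 < 1) :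
    slicePt I x y ∈ QBall := by
  have := norm_slicePt_sq hI x y
  simp only [QBall, Metric.mem_ball, dist_zero_right]
  nlinarith [norm_nonneg (slicePt I x y)]

/-- imaginary part -/
def impart (q : ℍ[ℝ]) : ℍ[ℝ] := q - (q.re : ℍ[ℝ])

lemma impart_re (q : ℍ[ℝ]) : (impart q).re = 0 := by simp [impart]

lemma norm_impart_sq (q : ℍ[ℝ]) : ‖impart q‖ ^ 2 = ‖q‖ ^ 2 - q.re ^ 2 := by
  have h : q = (q.re : ℍ[ℝ]) + impart q := by simp [impart]
  have h2 := norm_add_sq_real (q.re : ℍ[ℝ]) (impart q)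
  rw [← h] at h2
  rw [inner_coe_left, impart_re] at h2
  simp only [Quaternion.norm_coe, Real.norm_eq_abs, sq_abs] at h2
  nlinarith [h2]

/-- decomposition of any quaternion as a slice point with nonneg y -/
lemma exists_slicePt (q : ℍ[ℝ]) (I₀ : ℍ[ℝ]) (hI₀ : I₀ ∈ QSphere) :
    ∃ I' ∈ QSphere, q = slicePt I' q.re ‖impart q‖ := by
  by_cases h : impart q = 0
  · refine ⟨I₀, hI₀, ?_⟩
    have : q = (q.re : ℍ[ℝ]) := by have := h; rw [impart, sub_eq_zero] at this; exact this
    rw [h]; simp [slicePt, ← this]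
  · refine ⟨‖impart q‖⁻¹ • impart q, mem_qsphere_of _ (by simp [impart_re]) (by
      rw [norm_smul]; simp [norm_ne_zero_iff.2 h]), ?_⟩
    rw [slicePt, smul_smul, mul_inv_cancel₀ (norm_ne_zero_iff.2 h), one_smul, impart]
    exact (add_sub_cancel _ _).symm


open Quaternion

variable {I J : ℍ[ℝ]}

lemma sliceEmbed_eq_lift (hI : I ∈ QSphere) (z : ℂ) :
    sliceEmbed I z = Complex.liftAux I (mem_qsphere_iff.1 hI) z := by
  rw [Complex.liftAux_apply]
  rfl

lemma eps_add (hI : I ∈ QSphere) (z w : ℂ) :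
    sliceEmbed I (z + w) = sliceEmbed I z + sliceEmbed I w := by
  simp only [sliceEmbed_eq_lift hI, map_add]

lemma eps_sub (hI : I ∈ QSphere) (z w : ℂ) :
    sliceEmbed I (z - w) = sliceEmbed I z - sliceEmbed I w := by
  simp only [sliceEmbed_eq_lift hI, map_sub]

lemma eps_mul (hI : I ∈ QSphere) (z w : ℂ) :
    sliceEmbed I (z * w) = sliceEmbed I z * sliceEmbed I w := by
  simp only [sliceEmbed_eq_lift hI, map_mul]

lemma eps_I (hI : I ∈ QSphere) : sliceEmbed I Complex.I = I := by
  rw [sliceEmbed_eq_lift hI, Complex.liftAux_apply]; simp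

lemma eps_neg (hI : I ∈ QSphere) (z : ℂ) : sliceEmbed I (-z) = -(sliceEmbed I z) := by
  simp only [sliceEmbed_eq_lift hI, map_neg]

lemma eps_re (hI : I ∈ QSphere) (z : ℂ) : (sliceEmbed I z).re = z.re := by
  simp [sliceEmbed, slicePt, re_eq_zero hI]

lemma eps_star (hI : I ∈ QSphere) (z : ℂ) : star (sliceEmbed I z) = sliceEmbed I (conj z) := by
  have h : star (z.im • I) = z.im • star I := star_smul z.im I
  simp only [sliceEmbed, slicePt, star_add, Quaternion.star_coe, h, star_eq_neg' hI, smul_neg,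
    Complex.conj_re, Complex.conj_im, neg_smul]

lemma norm_eps (hI : I ∈ QSphere) (z : ℂ) : ‖sliceEmbed I z‖ = ‖z‖ := by
  have h := norm_slicePt_sq hI z.re z.im
  have h2 : ‖z‖ ^ 2 = z.re ^ 2 + z.im ^ 2 := by
    rw [Complex.sq_norm, Complex.normSq_apply]; ring
  have h3 : ‖sliceEmbed I z‖ ^ 2 = ‖z‖ ^ 2 := by
    rw [h2]; exact h
  rw [← Real.sqrt_sq (norm_nonneg (sliceEmbed I z)), ← Real.sqrt_sq (norm_nonneg z), h3]

lemma mul_I_eps (hI : I ∈ QSphere) (z : ℂ) :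
    I * sliceEmbed I z = sliceEmbed I (Complex.I * z) := by
  rw [eps_mul hI, eps_I hI]

section WithJ
variable (hI : I ∈ QSphere) (hJ : J ∈ QSphere) (hIJ : I * J = -(J * I))
include hI hJ hIJ

lemma J_comm_eps (z : ℂ) : J * sliceEmbed I z = sliceEmbed I (conj z) * J := by
  have hJI : J * I = -(I * J) := by rw [hIJ, neg_neg]
  simp only [sliceEmbed, slicePt, mul_add, add_mul, Complex.conj_re, Complex.conj_im]
  rw [mul_smul_comm, smul_mul_assoc, neg_smul, hJI, smul_neg, ← neg_smul,
    ← Quaternion.coe_commutes]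

lemma re_IJ : (I * J).re = 0 := by
  have h := re_mul_comm I J
  have h2 : (I * J).re = (-(J*I)).re := by rw [hIJ]
  simp only [Quaternion.re_neg] at h2
  linarith

lemma re_eps_J (z : ℂ) : (sliceEmbed I z * J).re = 0 := by
  simp only [sliceEmbed, slicePt, add_mul, Quaternion.re_add, smul_mul_assoc, Quaternion.re_smul]
  rw [Quaternion.coe_mul_eq_smul]
  simp [Quaternion.re_smul, re_eq_zero hJ, re_IJ hI hJ hIJ]

/-- Pythagoras on the slice -/
lemma norm_split_sq (z w : ℂ) :
    ‖sliceEmbed I z + sliceEmbed I w * J‖ ^ 2 = ‖z‖ ^ 2 + ‖w‖ ^ 2 := by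
  have horth : ⟪sliceEmbed I z, sliceEmbed I w * J⟫ = 0 := by
    rw [inner_def']
    have hs : star (sliceEmbed I w * J) = - (sliceEmbed I w * J) := by
      rw [star_mul, star_eq_neg' hJ, eps_star hI, neg_mul, J_comm_eps hI hJ hIJ,
        Complex.conj_conj]
    rw [hs, mul_neg, ← mul_assoc, ← eps_mul hI, Quaternion.re_neg,
      re_eps_J hI hJ hIJ, neg_zero]
  have h := norm_add_sq_real (sliceEmbed I z) (sliceEmbed I w * J)
  rw [horth] at h
  rw [h, norm_mul, norm_eps hI, norm_eps hI, norm_eq_one hJ]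
  ring
end WithJ


open Quaternion

/-- the standard quaternion i -/
def qi : ℍ[ℝ] := ⟨0,1,0,0⟩
def qj : ℍ[ℝ] := ⟨0,0,1,0⟩

lemma qi_mul_qi : qi * qi = -1 := by
  ext <;> simp [Quaternion.re_mul, Quaternion.imI_mul, Quaternion.imJ_mul, Quaternion.imK_mul] <;> simp [qi]

lemma qi_mem : qi ∈ QSphere := mem_qsphere_iff.2 qi_mul_qi

lemma qj_ne_zero : qj ≠ 0 := by
  intro h
  have := congrArg QuaternionAlgebra.imJ h
  simp [qj] at this

/-- first complex component -/
def phi1 : ℍ[ℝ] →ₗ[ℝ] ℂ where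
  toFun q := ⟨q.re, q.imI⟩
  map_add' a b := by simp [Complex.ext_iff]
  map_smul' c a := by simp [Complex.ext_iff]

/-- second complex component -/
def phi2 : ℍ[ℝ] →ₗ[ℝ] ℂ where
  toFun q := ⟨q.imJ, q.imK⟩
  map_add' a b := by simp [Complex.ext_iff]
  map_smul' c a := by simp [Complex.ext_iff]

lemma phi1_apply (q : ℍ[ℝ]) : phi1 q = ⟨q.re, q.imI⟩ := rfl

lemma phi2_apply (q : ℍ[ℝ]) : phi2 q = ⟨q.imJ, q.imK⟩ := rfl

lemma phi1_qi_mul (q : ℍ[ℝ]) : phi1 (qi * q) = Complex.I * phi1 q := by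
  simp only [phi1_apply]
  simp [Complex.ext_iff, Quaternion.re_mul, Quaternion.imI_mul]
  simp [qi]

lemma phi2_qi_mul (q : ℍ[ℝ]) : phi2 (qi * q) = Complex.I * phi2 q := by
  simp only [phi2_apply]
  simp [Complex.ext_iff, Quaternion.imJ_mul, Quaternion.imK_mul]
  simp [qi]

lemma eq_zero_of_phi (q : ℍ[ℝ]) (h1 : phi1 q = 0) (h2 : phi2 q = 0) : q = 0 := by
  simp only [phi1_apply, phi2_apply, LinearMap.coe_mk, AddHom.coe_mk, Complex.ext_iff, Complex.zero_re,
    Complex.zero_im] at h1 h2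
  ext <;> simp [h1.1, h1.2, h2.1, h2.2]

open Classical in
def rotu (I' : ℍ[ℝ]) : ℍ[ℝ] := if I' = -qi then qj else qi + I'

lemma rotu_ne_zero {I' : ℍ[ℝ]} (hI' : I' ∈ QSphere) : rotu I' ≠ 0 := by
  unfold rotu
  split_ifs with h
  · exact qj_ne_zero
  · intro h0
    exact h (by linear_combination (norm := module) h0)

lemma rotu_mul {I' : ℍ[ℝ]} (hI' : I' ∈ QSphere) : rotu I' * I' = qi * rotu I' := by
  have h := mem_qsphere_iff.1 hI'
  unfold rotu
  split_ifs with hcase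
  · subst hcase
    ext <;> simp [Quaternion.re_mul, Quaternion.imI_mul, Quaternion.imJ_mul,
      Quaternion.imK_mul] <;> simp [qi, qj]
  · rw [add_mul, mul_add, h, qi_mul_qi]
    exact add_comm _ _

/-- complex CR implies complex differentiability -/
lemma cr_to_holo (E : ℝ × ℝ → ℂ)
    (hE : ∀ w : ℝ × ℝ, w.1 ^ 2 + w.2 ^ 2 < 1 →
      DifferentiableAt ℝ E w ∧
        fderiv ℝ E w (1, 0) + Complex.I * fderiv ℝ E w (0, 1) = 0) :
    DifferentiableOn ℂ (fun z : ℂ => E (z.re, z.im)) (Metric.ball 0 1) := by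
  intro z hz
  have hzlt : z.re ^ 2 + z.im ^ 2 < 1 := by
    rw [Metric.mem_ball, dist_zero_right] at hz
    have h2 : ‖z‖ ^ 2 = z.re ^ 2 + z.im ^ 2 := by
      rw [Complex.sq_norm, Complex.normSq_apply]; ring
    nlinarith [norm_nonneg z]
  obtain ⟨hd, hcr⟩ := hE (z.re, z.im) hzlt
  set L := fderiv ℝ E (z.re, z.im) with hL
  set c := L (1, 0) with hc
  have hL01 : L (0, 1) = Complex.I * c := by
    linear_combination (-Complex.I) * hcr + L (0, 1) * Complex.I_mul_I
  set ρ : ℂ →L[ℝ] ℝ × ℝ := Complex.equivRealProdCLM.toContinuousLinearMap with hρ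
  have h1 : HasFDerivAt (fun z : ℂ => E (z.re, z.im)) (L.comp ρ) z := by
    have h2 : HasFDerivAt ρ ρ z := ρ.hasFDerivAt
    exact (hd.hasFDerivAt).comp z h2
  set M : ℂ →L[ℂ] ℂ := c • (1 : ℂ →L[ℂ] ℂ) with hM
  have hrestrict : M.restrictScalars ℝ = L.comp ρ := by
    apply ContinuousLinearMap.ext
    intro w
    have hw : (w.re, w.im) = w.re • ((1:ℝ), (0:ℝ)) + w.im • ((0:ℝ), (1:ℝ)) := by
      simp [Prod.ext_iff]
    have : (L.comp ρ) w = L (w.re, w.im) := rfl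
    have happ : (ContinuousLinearMap.restrictScalars ℝ M) w = c * w := rfl
    rw [this, hw, map_add, L.map_smul, L.map_smul, hL01, happ, ← hc]
    nth_rewrite 1 [(Complex.re_add_im w).symm]
    rw [Complex.real_smul, Complex.real_smul]
    ring
  exact (hasFDerivAt_of_restrictScalars ℝ h1 hrestrict).differentiableAt.differentiableWithinAt

/-- identity principle from the real segment -/
lemma holo_zero (g : ℂ → ℂ) (hg : DifferentiableOn ℂ g (Metric.ball 0 1))
    (h0 : ∀ x : ℝ, |x| < 1 → g x = 0) : ∀ z ∈ Metric.ball (0:ℂ) 1, g z = 0 := by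
  have han : AnalyticOnNhd ℂ g (Metric.ball 0 1) := hg.analyticOnNhd Metric.isOpen_ball
  have hfreq : ∃ᶠ z in 𝓝[≠] (0:ℂ), g z = 0 := by
    have htend : Filter.Tendsto (fun n : ℕ => ((1 / (n + 2) : ℝ) : ℂ)) Filter.atTop (𝓝[≠] 0) := by
      apply tendsto_nhdsWithin_of_tendsto_nhds_of_eventually_within
      · have h1 : Filter.Tendsto (fun n : ℕ => ((n : ℝ) + 2)) Filter.atTop Filter.atTop :=
          Filter.tendsto_atTop_add_const_right _ 2 tendsto_natCast_atTop_atTop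
        have h2 : Filter.Tendsto (fun n : ℕ => (1 / (n + 2) : ℝ)) Filter.atTop (𝓝 0) := by
          simpa [one_div, Function.comp_def] using tendsto_inv_atTop_zero.comp h1
        have h3 := (Complex.continuous_ofReal.tendsto 0).comp h2
        rw [Complex.ofReal_zero] at h3
        exact h3
      · filter_upwards with n
        simp only [Set.mem_compl_iff, Set.mem_singleton_iff, Complex.ofReal_eq_zero]
        positivity
    apply htend.frequently
    apply Filter.Frequently.of_forall
    intro n
    apply h0
    rw [abs_of_pos (by positivity)]
    rw [div_lt_one (by positivity)]
    linarith [Nat.cast_nonneg (α := ℝ) n]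
  exact fun z hz =>
    han.eqOn_zero_of_preconnected_of_frequently_eq_zero
      (convex_ball (0:ℂ) 1).isPreconnected (Metric.mem_ball_self one_pos) hfreq hz


open Quaternion

lemma crcomb {R : Type*} [Ring R] (i i' a2 a2' b2 : R)
    (hi : i * i = -1) (hi' : i' * i' = -1) :
    ((-(i' * b2) + -(i' * b2)) - (-(i * a2) + -(i * a2')) - (i' * i) * (-(i * a2') - -(i * a2)))
      + i' * ((b2 + b2) - (a2 + -a2') - (i' * i) * (-a2' - a2)) = 0 := by
  have h1 : ∀ x : R, (i' * i) * (i * x) = -(i' * x) := fun x => by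
    rw [mul_assoc i' i (i * x), ← mul_assoc i i x, hi, neg_one_mul, mul_neg]
  have h3 : ∀ x : R, i' * ((i' * i) * x) = -(i * x) := fun x => by
    rw [← mul_assoc i' (i' * i) x, ← mul_assoc i' i' i, hi', neg_one_mul, neg_mul]
  simp only [mul_sub, mul_add, mul_neg, neg_neg, h1, h3]
  abel

set_option maxHeartbeats 1000000 in
theorem rep_formula {f : ℍ[ℝ] → ℍ[ℝ]} (hreg : SliceRegular f) {I I' : ℍ[ℝ]}
    (hI : I ∈ QSphere) (hI' : I' ∈ QSphere) {x y : ℝ} (hxy : x ^ 2 + y ^ 2 < 1) :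
    f (slicePt I' x y) + f (slicePt I' x y)
      = (f (slicePt I x y) + f (slicePt I x (-y)))
        + I' * (I * (f (slicePt I x (-y)) - f (slicePt I x y))) := by
  classical
  set u : ℝ × ℝ → ℍ[ℝ] := fun w => f (slicePt I w.1 w.2) with hu
  set u' : ℝ × ℝ → ℍ[ℝ] := fun w => f (slicePt I' w.1 w.2) with hu'
  set σ : ℝ × ℝ →L[ℝ] ℝ × ℝ :=
    (ContinuousLinearMap.fst ℝ ℝ ℝ).prod (-(ContinuousLinearMap.snd ℝ ℝ ℝ)) with hσ
  have hσapp : ∀ w : ℝ × ℝ, σ w = (w.1, -w.2) := fun w => by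
    simp [hσ, ContinuousLinearMap.prod_apply]
  set c : ℍ[ℝ] := I' * I with hc
  set d : ℝ × ℝ → ℍ[ℝ] :=
    fun w => (u' w + u' w) - (u w + u (σ w)) - c * (u (σ w) - u w) with hd
  set v := rotu I' with hv
  have hvne : v ≠ 0 := rotu_ne_zero hI'
  have hvI' : v * I' = qi * v := rotu_mul hI'
  set Lv : ℍ[ℝ] →L[ℝ] ℍ[ℝ] := ContinuousLinearMap.mul ℝ ℍ[ℝ] v with hLv
  set Lc : ℍ[ℝ] →L[ℝ] ℍ[ℝ] := ContinuousLinearMap.mul ℝ ℍ[ℝ] c with hLc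
  have hdisc_σ : ∀ w : ℝ × ℝ, w.1 ^ 2 + w.2 ^ 2 < 1 → ((σ w).1 ^ 2 + (σ w).2 ^ 2 < 1) := by
    intro w hw; rw [hσapp]; simpa using hw
  have dCR : ∀ w : ℝ × ℝ, w.1 ^ 2 + w.2 ^ 2 < 1 →
      DifferentiableAt ℝ d w ∧ fderiv ℝ d w (1, 0) + I' * fderiv ℝ d w (0, 1) = 0 := by
    intro w hw
    obtain ⟨hdu, hcru⟩ := hreg I hI w hw
    obtain ⟨hduσ, hcruσ⟩ := hreg I hI (σ w) (hdisc_σ w hw)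
    obtain ⟨hdu', hcru'⟩ := hreg I' hI' w hw
    rw [← hu] at hdu hcru hduσ hcruσ
    rw [← hu'] at hdu' hcru'
    set A := fderiv ℝ u w with hA
    set A' := fderiv ℝ u (σ w) with hA'
    set B := fderiv ℝ u' w with hB
    have hAh : HasFDerivAt u A w := hdu.hasFDerivAt
    have hA'h : HasFDerivAt u A' (σ w) := hduσ.hasFDerivAt
    have hBh : HasFDerivAt u' B w := hdu'.hasFDerivAt
    have hAσ : HasFDerivAt (fun w => u (σ w)) (A'.comp σ) w := hA'h.comp w σ.hasFDerivAt
    have hD : HasFDerivAt d ((B + B) - (A + A'.comp σ) - Lc.comp ((A'.comp σ) - A)) w := by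
      have h3 : HasFDerivAt (fun w => u (σ w) - u w) ((A'.comp σ) - A) w := hAσ.sub hAh
      have h4 : HasFDerivAt (fun w => c * (u (σ w) - u w)) (Lc.comp ((A'.comp σ) - A)) w := by
        have := (Lc.hasFDerivAt (x := u (σ w) - u w)).comp w h3
        simpa [hLc, Function.comp_def] using this
      exact ((hBh.add hBh).sub (hAh.add hAσ)).sub h4
    refine ⟨hD.differentiableAt, ?_⟩
    rw [hD.fderiv]
    have hσ10 : σ ((1:ℝ), (0:ℝ)) = ((1:ℝ), (0:ℝ)) := by rw [hσapp]; norm_num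
    have hσ01 : σ ((0:ℝ), (1:ℝ)) = -((0:ℝ), (1:ℝ)) := by
      rw [hσapp]; simp [Prod.ext_iff]
    have ha : A (1, 0) = -(I * A (0, 1)) := eq_neg_of_add_eq_zero_left hcru
    have ha' : A' (1, 0) = -(I * A' (0, 1)) := eq_neg_of_add_eq_zero_left hcruσ
    have hb : B (1, 0) = -(I' * B (0, 1)) := eq_neg_of_add_eq_zero_left hcru'
    have hLcapp : ∀ q, Lc q = c * q := fun q => rfl
    simp only [ContinuousLinearMap.sub_apply, ContinuousLinearMap.add_apply,
      ContinuousLinearMap.comp_apply, hσ10, hσ01, map_neg, hLcapp]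
    rw [ha, ha', hb, hc]
    exact crcomb I I' (A (0,1)) (A' (0,1)) (B (0,1)) (mem_qsphere_iff.1 hI)
      (mem_qsphere_iff.1 hI')
  have hkey : ∀ (Φ : ℍ[ℝ] →ₗ[ℝ] ℂ), (∀ q, Φ (qi * q) = Complex.I * Φ q) →
      ∀ z ∈ Metric.ball (0:ℂ) 1, Φ (v * d (z.re, z.im)) = 0 := by
    intro Φ hΦ
    set Ψ : ℍ[ℝ] →L[ℝ] ℂ := (LinearMap.toContinuousLinearMap Φ).comp Lv with hΨ
    have hΨapp : ∀ q, Ψ q = Φ (v * q) := fun q => rfl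
    set E : ℝ × ℝ → ℂ := fun w => Ψ (d w) with hE
    have hEcr : ∀ w : ℝ × ℝ, w.1 ^ 2 + w.2 ^ 2 < 1 →
        DifferentiableAt ℝ E w ∧
          fderiv ℝ E w (1, 0) + Complex.I * fderiv ℝ E w (0, 1) = 0 := by
      intro w hw
      obtain ⟨hdd, hdcr⟩ := dCR w hw
      have hDh : HasFDerivAt d (fderiv ℝ d w) w := hdd.hasFDerivAt
      have hEh : HasFDerivAt E (Ψ.comp (fderiv ℝ d w)) w := (Ψ.hasFDerivAt).comp w hDh
      refine ⟨hEh.differentiableAt, ?_⟩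
      rw [hEh.fderiv]
      simp only [ContinuousLinearMap.comp_apply, hΨapp]
      rw [← hΦ, ← map_add]
      have hfact : v * (fderiv ℝ d w) (1,0) + qi * (v * (fderiv ℝ d w) (0,1))
          = v * ((fderiv ℝ d w) (1,0) + I' * (fderiv ℝ d w) (0,1)) := by
        rw [← mul_assoc, ← hvI', mul_assoc, mul_add]
      rw [hfact, hdcr, mul_zero, map_zero]
    have hdiff := cr_to_holo E hEcr
    have h0 : ∀ t : ℝ, |t| < 1 → (fun z : ℂ => E (z.re, z.im)) t = 0 := by
      intro t ht
      have hσt : σ (t, 0) = (t, 0) := by rw [hσapp]; norm_num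
      have hpt : u' (t, 0) = u (t, 0) := by
        rw [hu, hu']
        show f (slicePt I' t 0) = f (slicePt I t 0)
        simp [slicePt]
      have hd0 : d (t, 0) = 0 := by
        rw [hd]
        simp only [hσt, hpt]
        simp
      show E (((t:ℂ)).re, ((t:ℂ)).im) = 0
      rw [Complex.ofReal_re, Complex.ofReal_im, hE]
      simp only [hd0, map_zero]
    intro z hz
    exact holo_zero _ hdiff h0 z hz
  set z : ℂ := ⟨x, y⟩ with hz
  have hzball : z ∈ Metric.ball (0:ℂ) 1 := by
    rw [Metric.mem_ball, dist_zero_right]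
    have habs : ‖z‖ ^ 2 = x ^ 2 + y ^ 2 := by
      rw [Complex.sq_norm, Complex.normSq_apply]
      show x * x + y * y = _
      ring
    nlinarith [norm_nonneg z]
  have h1 := hkey phi1 phi1_qi_mul z hzball
  have h2 := hkey phi2 phi2_qi_mul z hzball
  have hvd : v * d (x, y) = 0 := eq_zero_of_phi _ h1 h2
  have hd00 : d (x, y) = 0 := by
    rcases mul_eq_zero.1 hvd with h | h
    · exact absurd h hvne
    · exact h
  have hdxy : d (x, y) =
      (f (slicePt I' x y) + f (slicePt I' x y))
        - (f (slicePt I x y) + f (slicePt I x (-y)))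
        - c * (f (slicePt I x (-y)) - f (slicePt I x y)) := rfl
  rw [hdxy] at hd00
  have hmain := eq_add_of_sub_eq (sub_eq_zero.mp hd00)
  rw [hc, mul_assoc] at hmain
  exact hmain.trans (add_comm _ _)


open Quaternion

section WithJ
variable {I J : ℍ[ℝ]} (hI : I ∈ QSphere) (hJ : J ∈ QSphere) (hIJ : I * J = -(J * I))
include hI hJ hIJ

lemma re_mul_star_split (P Q R S : ℂ) :
    ((sliceEmbed I P + sliceEmbed I Q * J) * star (sliceEmbed I R + sliceEmbed I S * J)).re
      = (P * conj R + Q * conj S).re := by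
  have hJJ : J * J = -1 := mem_qsphere_iff.1 hJ
  have hsJ : star (sliceEmbed I S * J) = -(sliceEmbed I S * J) := by
    rw [star_mul, star_eq_neg' hJ, eps_star hI, neg_mul, J_comm_eps hI hJ hIJ, Complex.conj_conj]
  rw [star_add, eps_star hI, hsJ, mul_add, add_mul, add_mul]
  have ht1 : sliceEmbed I P * sliceEmbed I (conj R) = sliceEmbed I (P * conj R) :=
    (eps_mul hI _ _).symm
  have ht2 : sliceEmbed I P * -(sliceEmbed I S * J) = -(sliceEmbed I (P * S) * J) := by
    rw [mul_neg, ← mul_assoc, ← eps_mul hI]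
  have ht3 : sliceEmbed I Q * J * sliceEmbed I (conj R) = sliceEmbed I (Q * R) * J := by
    rw [mul_assoc, J_comm_eps hI hJ hIJ, Complex.conj_conj, ← mul_assoc, ← eps_mul hI]
  have ht4 : sliceEmbed I Q * J * -(sliceEmbed I S * J) = sliceEmbed I (Q * conj S) := by
    rw [mul_neg, mul_assoc (sliceEmbed I Q) J, ← mul_assoc J, J_comm_eps hI hJ hIJ,
      mul_assoc (sliceEmbed I (conj S)), hJJ]
    rw [mul_neg, mul_one, mul_neg, neg_neg, ← eps_mul hI]
  rw [ht1, ht2, ht3, ht4]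
  simp only [Quaternion.re_add, Quaternion.re_neg, re_eps_J hI hJ hIJ, eps_re hI, neg_zero,
    add_zero, zero_add, Complex.add_re]

lemma norm_split (z w : ℂ) :
    ‖sliceEmbed I z + sliceEmbed I w * J‖
      = Real.sqrt (‖z‖ ^ 2 + ‖w‖ ^ 2) := by
  rw [← norm_split_sq hI hJ hIJ, Real.sqrt_sq (norm_nonneg _)]
end WithJ

/-- the key sphere-maximum transfer lemma -/
lemma sphere_max (a b a' b' : ℍ[ℝ]) (hna : ‖a'‖ = ‖a‖) (hnb : ‖b'‖ = ‖b‖)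
    (hre : (a' * star b').re = (a * star b).re) {I'' : ℍ[ℝ]} (hI'' : I'' ∈ QSphere) :
    ∃ I₃ ∈ QSphere, ‖a' + I'' * b'‖ ≤ ‖a + I₃ * b‖ := by
  set w : ℍ[ℝ] := a * star b with hw
  set w' : ℍ[ℝ] := a' * star b' with hw'
  have hwnorm : ‖w'‖ = ‖w‖ := by rw [hw, hw', norm_mul, norm_mul, norm_star, norm_star, hna, hnb]
  have him : ‖impart w'‖ = ‖impart w‖ := by
    have h1 := norm_impart_sq w
    have h2 := norm_impart_sq w'
    have : ‖impart w'‖ ^ 2 = ‖impart w‖ ^ 2 := by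
      rw [h1, h2, hwnorm, hre]
    nlinarith [norm_nonneg (impart w), norm_nonneg (impart w')]
  have hinner : ∀ (p q : ℍ[ℝ]) (K : ℍ[ℝ]), K ∈ QSphere →
      ⟪p, K * q⟫ = ⟪impart (p * star q), K⟫ := by
    intro p q K hK
    rw [inner_def', star_mul, star_eq_neg' hK, mul_neg, mul_neg, Quaternion.re_neg,
      ← mul_assoc]
    have hrhs : ⟪impart (p * star q), K⟫ = -((impart (p * star q) * K).re) := by
      rw [inner_def', star_eq_neg' hK, mul_neg, Quaternion.re_neg]
    rw [hrhs, neg_inj]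
    have hdec : p * star q = ((p * star q).re : ℍ[ℝ]) + impart (p * star q) := by
      rw [impart]; abel
    nth_rewrite 1 [hdec]
    rw [add_mul, Quaternion.re_add, Quaternion.coe_mul_eq_smul, Quaternion.re_smul,
      re_eq_zero hK, smul_zero, zero_add]
  -- bound for the primed side
  have hb' : ⟪a', I'' * b'⟫ ≤ ‖impart w‖ := by
    rw [hinner a' b' I'' hI'', ← hw', ← him]
    calc ⟪impart w', I''⟫ ≤ ‖impart w'‖ * ‖I''‖ := real_inner_le_norm _ _
      _ = ‖impart w'‖ := by rw [norm_eq_one hI'', mul_one]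
  have hexp : ∀ (p q : ℍ[ℝ]) (K : ℍ[ℝ]), K ∈ QSphere →
      ‖p + K * q‖ ^ 2 = ‖p‖ ^ 2 + 2 * ⟪p, K * q⟫ + ‖q‖ ^ 2 := by
    intro p q K hK
    rw [norm_add_sq_real, norm_mul, norm_eq_one hK, one_mul]
  by_cases him0 : impart w = 0
  · refine ⟨qi, qi_mem, ?_⟩
    have h1 : ‖a' + I'' * b'‖ ^ 2 ≤ ‖a + qi * b‖ ^ 2 := by
      rw [hexp a' b' I'' hI'', hexp a b qi qi_mem, hna, hnb, hinner a b qi qi_mem, ← hw,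
        him0, inner_zero_left]
      have hb'' := hb'
      rw [him0, norm_zero] at hb''
      nlinarith [hb'']
    nlinarith [norm_nonneg (a' + I'' * b'), norm_nonneg (a + qi * b), h1]
  · set I₃ : ℍ[ℝ] := ‖impart w‖⁻¹ • impart w with hI₃
    have hI₃mem : I₃ ∈ QSphere := by
      apply mem_qsphere_of
      · rw [hI₃, Quaternion.re_smul, impart_re, smul_zero]
      · rw [hI₃, norm_smul, norm_inv, norm_norm, inv_mul_cancel₀ (norm_ne_zero_iff.2 him0)]
    refine ⟨I₃, hI₃mem, ?_⟩
    have hinn3 : ⟪a, I₃ * b⟫ = ‖impart w‖ := by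
      rw [hinner a b I₃ hI₃mem, ← hw, hI₃, real_inner_smul_right,
        real_inner_self_eq_norm_sq]
      rw [sq]
      field_simp
    have h1 : ‖a' + I'' * b'‖ ^ 2 ≤ ‖a + I₃ * b‖ ^ 2 := by
      rw [hexp a' b' I'' hI'', hexp a b I₃ hI₃mem, hna, hnb, hinn3]
      nlinarith [hb']
    nlinarith [norm_nonneg (a' + I'' * b'), norm_nonneg (a + I₃ * b), h1]


open Quaternion

lemma norm_self_add_self (q : ℍ[ℝ]) : ‖q + q‖ = 2 * ‖q‖ := by
  have h : q + q = (2:ℝ) • q := by rw [two_smul]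
  rw [h, norm_smul]
  norm_num

/-- pointwise bound for f on arbitrary slices -/
lemma bound_f {f : ℍ[ℝ] → ℍ[ℝ]} (hreg : SliceRegular f) {I I' : ℍ[ℝ]}
    (hI : I ∈ QSphere) (hI' : I' ∈ QSphere) {x y : ℝ} (hxy : x ^ 2 + y ^ 2 < 1) :
    ‖f (slicePt I' x y)‖ ≤ ‖f (slicePt I x y)‖ + ‖f (slicePt I x (-y))‖ := by
  have hrep := rep_formula hreg hI hI' hxy
  have h1 : 2 * ‖f (slicePt I' x y)‖ ≤ 2 * (‖f (slicePt I x y)‖ + ‖f (slicePt I x (-y))‖) := by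
    rw [← norm_self_add_self, hrep]
    calc ‖_ + I' * (I * (f (slicePt I x (-y)) - f (slicePt I x y)))‖
        ≤ ‖f (slicePt I x y) + f (slicePt I x (-y))‖
          + ‖I' * (I * (f (slicePt I x (-y)) - f (slicePt I x y)))‖ := norm_add_le _ _
      _ ≤ _ := by
          rw [norm_mul, norm_mul, norm_eq_one hI', norm_eq_one hI, one_mul, one_mul]
          have t1 := norm_add_le (f (slicePt I x y)) (f (slicePt I x (-y)))
          have t2 := norm_sub_le (f (slicePt I x (-y))) (f (slicePt I x y))
          linarith
  linarith

section Ctx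
variable {f fc : ℍ[ℝ] → ℍ[ℝ]} {I J : ℍ[ℝ]} {F G : ℂ → ℂ}
variable (hI : I ∈ QSphere) (hJ : J ∈ QSphere) (hIJ : I * J = -(J * I))
variable (hregf : SliceRegular f) (hregfc : SliceRegular fc)
variable (hsplit : ∀ z ∈ Metric.ball (0:ℂ) 1,
      f (sliceEmbed I z) = sliceEmbed I (F z) + sliceEmbed I (G z) * J)
variable (hfcsplit : ∀ z ∈ Metric.ball (0:ℂ) 1,
      fc (sliceEmbed I z) = sliceEmbed I (conj (F (conj z))) - sliceEmbed I (G z) * J)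

include hI hJ hIJ hregf hregfc hsplit hfcsplit

/-- splitting data for the sphere through `x ± y I` -/
lemma AB_split {x y : ℝ} (hxy : x ^ 2 + y ^ 2 < 1) :
    ∃ P Q R S : ℂ,
      (f (slicePt I x y) + f (slicePt I x (-y)) = sliceEmbed I P + sliceEmbed I Q * J) ∧
      (I * (f (slicePt I x (-y)) - f (slicePt I x y)) = sliceEmbed I R + sliceEmbed I S * J) ∧
      (fc (slicePt I x y) + fc (slicePt I x (-y))
        = sliceEmbed I (conj P) + sliceEmbed I (-Q) * J) ∧
      (I * (fc (slicePt I x (-y)) - fc (slicePt I x y))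
        = sliceEmbed I (conj R) + sliceEmbed I (-S) * J) := by
  set z : ℂ := ⟨x, y⟩ with hz
  have hzball : z ∈ Metric.ball (0:ℂ) 1 := by
    rw [Metric.mem_ball, dist_zero_right]
    have habs : ‖z‖ ^ 2 = x ^ 2 + y ^ 2 := by
      rw [Complex.sq_norm, Complex.normSq_apply]
      show x * x + y * y = _
      ring
    nlinarith [norm_nonneg z]
  have hzcball : conj z ∈ Metric.ball (0:ℂ) 1 := by
    rwa [Metric.mem_ball, dist_zero_right, Complex.norm_conj,
      ← dist_zero_right]
  have he1 : sliceEmbed I z = slicePt I x y := rfl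
  have he2 : sliceEmbed I (conj z) = slicePt I x (-y) := by
    show slicePt I (conj z).re (conj z).im = _
    rw [Complex.conj_re, Complex.conj_im]
  have hp := hsplit z hzball
  have hm := hsplit (conj z) hzcball
  have hcp := hfcsplit z hzball
  have hcm := hfcsplit (conj z) hzcball
  rw [he1] at hp hcp
  rw [he2] at hm hcm
  rw [Complex.conj_conj] at hcm
  refine ⟨F z + F (conj z), G z + G (conj z),
    Complex.I * (F (conj z) - F z), Complex.I * (G (conj z) - G z), ?_, ?_, ?_, ?_⟩
  · rw [hp, hm, eps_add hI, eps_add hI, add_mul]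
    abel
  · rw [hp, hm]
    have hd : sliceEmbed I (F (conj z)) + sliceEmbed I (G (conj z)) * J
        - (sliceEmbed I (F z) + sliceEmbed I (G z) * J)
        = sliceEmbed I (F (conj z) - F z) + sliceEmbed I (G (conj z) - G z) * J := by
      rw [eps_sub hI, eps_sub hI, sub_mul]
      abel
    rw [hd, mul_add, ← mul_assoc, eps_mul hI Complex.I _, eps_mul hI Complex.I _, eps_I hI]
  · rw [hcp, hcm]
    have h1 : conj (F z + F (conj z)) = conj (F (conj z)) + conj (F z) := by
      rw [map_add]
      ring
    have h2 : -(G z + G (conj z)) = -(G z) + -(G (conj z)) := by ring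
    rw [h1, h2, eps_add hI, eps_add hI, add_mul]
    rw [eps_neg hI, eps_neg hI, neg_mul, neg_mul]
    abel
  · rw [hcp, hcm]
    have h1 : conj (Complex.I * (F (conj z) - F z))
        = Complex.I * (conj (F z) - conj (F (conj z))) := by
      rw [map_mul, map_sub, Complex.conj_I]
      ring
    have h2 : -(Complex.I * (G (conj z) - G z)) = Complex.I * (G z - G (conj z)) := by ring
    rw [h1, h2]
    have hd : sliceEmbed I (conj (F z)) - sliceEmbed I (G (conj z)) * J
        - (sliceEmbed I (conj (F (conj z))) - sliceEmbed I (G z) * J)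
        = sliceEmbed I (conj (F z) - conj (F (conj z))) + sliceEmbed I (G z - G (conj z)) * J := by
      rw [eps_sub hI, eps_sub hI, sub_mul]
      abel
    rw [hd, mul_add, ← mul_assoc, eps_mul hI Complex.I _, eps_mul hI Complex.I _, eps_I hI]

/-- pointwise bound for fc on arbitrary slices -/
lemma bound_fc {I'' : ℍ[ℝ]} (hI'' : I'' ∈ QSphere) {x y : ℝ} (hxy : x ^ 2 + y ^ 2 < 1) :
    ‖fc (slicePt I'' x y)‖ ≤ ‖f (slicePt I x y)‖ + ‖f (slicePt I x (-y))‖ := by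
  obtain ⟨P, Q, R, S, hA, hB, hA', hB'⟩ :=
    AB_split hI hJ hIJ hregf hregfc hsplit hfcsplit hxy
  have hrep := rep_formula hregfc hI hI'' hxy
  rw [hA', hB'] at hrep
  have hnA' : ‖sliceEmbed I (conj P) + sliceEmbed I (-Q) * J‖
      = ‖sliceEmbed I P + sliceEmbed I Q * J‖ := by
    rw [norm_split hI hJ hIJ, norm_split hI hJ hIJ, Complex.norm_conj, norm_neg]
  have hnB' : ‖sliceEmbed I (conj R) + sliceEmbed I (-S) * J‖
      = ‖sliceEmbed I R + sliceEmbed I S * J‖ := by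
    rw [norm_split hI hJ hIJ, norm_split hI hJ hIJ, Complex.norm_conj, norm_neg]
  have h2 : 2 * ‖fc (slicePt I'' x y)‖
      ≤ 2 * (‖f (slicePt I x y)‖ + ‖f (slicePt I x (-y))‖) := by
    rw [← norm_self_add_self, hrep]
    have t0 := norm_add_le (sliceEmbed I (conj P) + sliceEmbed I (-Q) * J)
      (I'' * (sliceEmbed I (conj R) + sliceEmbed I (-S) * J))
    rw [norm_mul, norm_eq_one hI'', one_mul, hnA', hnB', ← hA, ← hB] at t0
    have t1 := norm_add_le (f (slicePt I x y)) (f (slicePt I x (-y)))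
    have t2 : ‖I * (f (slicePt I x (-y)) - f (slicePt I x y))‖
        ≤ ‖f (slicePt I x (-y))‖ + ‖f (slicePt I x y)‖ := by
      rw [norm_mul, norm_eq_one hI, one_mul]
      exact norm_sub_le _ _
    linarith
  linarith

/-- sharp sphere bound for fc -/
lemma bound_fc_sphere {I'' : ℍ[ℝ]} (hI'' : I'' ∈ QSphere) {x y : ℝ} (hxy : x ^ 2 + y ^ 2 < 1) :
    ∃ I₃ ∈ QSphere, ‖fc (slicePt I'' x y)‖ ≤ ‖f (slicePt I₃ x y)‖ := by
  obtain ⟨P, Q, R, S, hA, hB, hA', hB'⟩ :=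
    AB_split hI hJ hIJ hregf hregfc hsplit hfcsplit hxy
  have hna : ‖sliceEmbed I (conj P) + sliceEmbed I (-Q) * J‖
      = ‖sliceEmbed I P + sliceEmbed I Q * J‖ := by
    rw [norm_split hI hJ hIJ, norm_split hI hJ hIJ, Complex.norm_conj, norm_neg]
  have hnb : ‖sliceEmbed I (conj R) + sliceEmbed I (-S) * J‖
      = ‖sliceEmbed I R + sliceEmbed I S * J‖ := by
    rw [norm_split hI hJ hIJ, norm_split hI hJ hIJ, Complex.norm_conj, norm_neg]
  have hre : ((sliceEmbed I (conj P) + sliceEmbed I (-Q) * J)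
        * star (sliceEmbed I (conj R) + sliceEmbed I (-S) * J)).re
      = ((sliceEmbed I P + sliceEmbed I Q * J)
        * star (sliceEmbed I R + sliceEmbed I S * J)).re := by
    rw [re_mul_star_split hI hJ hIJ, re_mul_star_split hI hJ hIJ]
    have h1 : conj P * conj (conj R) + -Q * conj (-S) = conj (P * conj R) + Q * conj S := by
      rw [Complex.conj_conj, map_mul, Complex.conj_conj, map_neg]
      ring
    rw [h1, Complex.add_re, Complex.add_re, Complex.conj_re]
  obtain ⟨I₃, hI₃, hle⟩ := sphere_max _ _ _ _ hna hnb hre hI''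
  refine ⟨I₃, hI₃, ?_⟩
  have hrepc := rep_formula hregfc hI hI'' hxy
  have hrepf := rep_formula hregf hI hI₃ hxy
  rw [hA', hB'] at hrepc
  rw [hA, hB] at hrepf
  have e1 : 2 * ‖fc (slicePt I'' x y)‖ ≤ 2 * ‖f (slicePt I₃ x y)‖ := by
    rw [← norm_self_add_self, ← norm_self_add_self, hrepc, hrepf]
    exact hle
  linarith
end Ctx


open Quaternion

lemma re_conj_mul {v : ℍ[ℝ]} (q : ℍ[ℝ]) (hv : v ≠ 0) : (v⁻¹ * q * v).re = q.re := by
  rw [re_mul_comm, ← mul_assoc, mul_inv_cancel₀ hv, one_mul]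

lemma norm_conj_mul {v : ℍ[ℝ]} (q : ℍ[ℝ]) (hv : v ≠ 0) : ‖v⁻¹ * q * v‖ = ‖q‖ := by
  rw [norm_mul, norm_mul, norm_inv]
  have : ‖v‖ ≠ 0 := norm_ne_zero_iff.2 hv
  field_simp

/-- geometry of the conjugated point -/
lemma conj_pt_slice {I₀ v : ℍ[ℝ]} (hI₀ : I₀ ∈ QSphere) (hv : v ≠ 0)
    {I' : ℍ[ℝ]} (hI' : I' ∈ QSphere) (x y : ℝ) :
    ∃ I'' ∈ QSphere, v⁻¹ * slicePt I' x y * v = slicePt I'' x |y| := by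
  set q := slicePt I' x y with hq
  set q' := v⁻¹ * q * v with hq'
  have hre : q'.re = x := by rw [hq', re_conj_mul q hv, hq, slicePt_re hI']
  have hnorm : ‖q'‖ = ‖q‖ := norm_conj_mul q hv
  have himp : ‖impart q'‖ = |y| := by
    have h1 := norm_impart_sq q'
    rw [hnorm, hre, hq, norm_slicePt_sq hI'] at h1
    have h2 : ‖impart q'‖ ^ 2 = |y| ^ 2 := by rw [h1, sq_abs]; ring
    rw [← Real.sqrt_sq (norm_nonneg _), ← Real.sqrt_sq (abs_nonneg y), h2]
  obtain ⟨I'', hI'', hq''⟩ := exists_slicePt q' I₀ hI₀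
  exact ⟨I'', hI'', by rw [hre, himp] at hq''; exact hq''⟩

/-- access the `p=∞` hardy norm -/
lemma le_hardyTop (f : ℍ[ℝ] → ℍ[ℝ]) {K : ℍ[ℝ]} (hK : K ∈ QSphere) {x y : ℝ}
    (hxy : x ^ 2 + y ^ 2 < 1) :
    ENNReal.ofReal ‖f (slicePt K x y)‖ ≤ hardyNorm f ⊤ := by
  have h1 : ENNReal.ofReal ‖f (slicePt K x y)‖ ≤ sliceNormE f K ⊤ := by
    rw [sliceNormE, if_pos rfl]
    exact le_iSup₂ (f := fun (w : ℝ × ℝ) (_ : w.1 ^ 2 + w.2 ^ 2 < 1) =>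
      ENNReal.ofReal ‖f (slicePt K w.1 w.2)‖) (x, y) hxy
  exact h1.trans (le_iSup₂ (f := fun K (_ : K ∈ QSphere) => sliceNormE f K ⊤) K hK)

/-- access the finite-p hardy norm -/
lemma le_hardyFin (f : ℍ[ℝ] → ℍ[ℝ]) {K : ℍ[ℝ]} (hK : K ∈ QSphere) {p : ℝ≥0∞} (hp : p ≠ ⊤)
    {r : ℝ} (hr : r ∈ Set.Ico (0:ℝ) 1) :
    sliceMp f K p.toReal r ≤ hardyNorm f p := by
  have h1 : sliceMp f K p.toReal r ≤ sliceNormE f K p := by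
    rw [sliceNormE, if_neg hp]
    exact le_iSup₂ (f := fun (r : ℝ) (_ : r ∈ Set.Ico (0:ℝ) 1) => sliceMp f K p.toReal r) r hr
  exact h1.trans (le_iSup₂ (f := fun K (_ : K ∈ QSphere) => sliceNormE f K p) K hK)

/-- continuity along circles -/
lemma cont_circle {g : ℍ[ℝ] → ℍ[ℝ]} (hreg : SliceRegular g) {K : ℍ[ℝ]} (hK : K ∈ QSphere)
    {r : ℝ} (hr : r ∈ Set.Ico (0:ℝ) 1) : Continuous fun θ => g (circlePt K r θ) := by
  rw [continuous_iff_continuousAt]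
  intro θ
  have hin : Continuous fun θ : ℝ => (r * Real.cos θ, r * Real.sin θ) :=
    (continuous_const.mul Real.continuous_cos).prodMk (continuous_const.mul Real.continuous_sin)
  have hpt : (r * Real.cos θ) ^ 2 + (r * Real.sin θ) ^ 2 < 1 := by
    have h1 : (r * Real.cos θ) ^ 2 + (r * Real.sin θ) ^ 2 = r ^ 2 := by
      have := Real.sin_sq_add_cos_sq θ
      nlinarith [this]
    rw [h1]
    obtain ⟨hr0, hr1⟩ := hr
    nlinarith
  have hd := (hreg K hK (r * Real.cos θ, r * Real.sin θ) hpt).1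
  show ContinuousAt ((fun w : ℝ × ℝ => g (slicePt K w.1 w.2)) ∘
    (fun θ : ℝ => (r * Real.cos θ, r * Real.sin θ))) θ
  exact ContinuousAt.comp hd.continuousAt hin.continuousAt

end QAux

namespace QAux
open Quaternion

lemma add_rpow_le (a b s : ℝ) (ha : 0 ≤ a) (hb : 0 ≤ b) (hs : 0 ≤ s) :
    (a + b) ^ s ≤ 2 ^ s * (a ^ s + b ^ s) := by
  have hmax : a + b ≤ 2 * max a b := by
    rcases le_total a b with h | h
    · rw [max_eq_right h]; linarith
    · rw [max_eq_left h]; linarith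
  have hmax0 : 0 ≤ max a b := le_max_of_le_left ha
  calc (a + b) ^ s ≤ (2 * max a b) ^ s :=
        Real.rpow_le_rpow (by positivity) hmax hs
    _ = 2 ^ s * (max a b) ^ s := Real.mul_rpow (by norm_num) hmax0
    _ ≤ 2 ^ s * (a ^ s + b ^ s) := by
        have h1 : (max a b) ^ s ≤ a ^ s + b ^ s := by
          rcases le_total a b with h | h
          · rw [max_eq_right h]
            nlinarith [Real.rpow_nonneg ha s]
          · rw [max_eq_left h]
            nlinarith [Real.rpow_nonneg hb s]
        have h2 : (0:ℝ) ≤ 2 ^ s := Real.rpow_nonneg (by norm_num) s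
        nlinarith

lemma circle_in_disc {r : ℝ} (hr : r ∈ Set.Ico (0:ℝ) 1) (θ : ℝ) :
    (r * Real.cos θ) ^ 2 + (r * Real.sin θ) ^ 2 < 1 := by
  have h1 : (r * Real.cos θ) ^ 2 + (r * Real.sin θ) ^ 2 = r ^ 2 := by
    have := Real.sin_sq_add_cos_sq θ
    nlinarith [this]
  rw [h1]
  obtain ⟨hr0, hr1⟩ := hr
  nlinarith

end QAux

open QAux in
set_option maxHeartbeats 3200000 in
/-- If `f ∈ H^p(𝔹)` with regular conjugate `fc` (characterized by its splitting on a slice)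
and symmetrization `fs = f * fc`, then `fs ∈ H^{p/2}(𝔹)`; moreover if `p = ∞` then
`‖fs‖_∞ ≤ ‖f‖_∞²`. -/
theorem symmetrization_memHp (f fc fs : ℍ[ℝ] → ℍ[ℝ]) (p : ℝ≥0∞) (hp : 0 < p)
    (hfH : MemHp f p)
    (I J : ℍ[ℝ]) (hI : I ∈ QSphere) (hJ : J ∈ QSphere) (hIJ : I * J = -(J * I))
    (F G : ℂ → ℂ)
    (hF : DifferentiableOn ℂ F (Metric.ball 0 1))
    (hG : DifferentiableOn ℂ G (Metric.ball 0 1))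
    (hsplit : ∀ z ∈ Metric.ball (0:ℂ) 1,
      f (sliceEmbed I z) = sliceEmbed I (F z) + sliceEmbed I (G z) * J)
    (hfc : SliceRegular fc)
    (hfcsplit : ∀ z ∈ Metric.ball (0:ℂ) 1,
      fc (sliceEmbed I z) = sliceEmbed I (conj (F (conj z))) - sliceEmbed I (G z) * J)
    (hfs : SliceRegular fs)
    (hfsdef : ∀ q ∈ QBall, fs q = starProd f fc q) :
    hardyNorm fs (p / 2) < ⊤ ∧
    (p = ⊤ → hardyNorm fs ⊤ ≤ hardyNorm f ⊤ ^ 2) := by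
  classical
  obtain ⟨hregf, hfin⟩ := hfH
  have hfin' : hardyNorm f p < ⊤ := hfin
  -- sharp pointwise bound (for p = ∞)
  have hbfs2 : ∀ I' ∈ QSphere, ∀ x y : ℝ, x ^ 2 + y ^ 2 < 1 → ∃ I₃ ∈ QSphere,
      ‖fs (slicePt I' x y)‖ ≤ ‖f (slicePt I' x y)‖ * ‖f (slicePt I₃ x |y|)‖ := by
    intro I' hI' x y hxy
    have hqball : slicePt I' x y ∈ QBall := slicePt_mem_ball hI' hxy
    have hval := hfsdef _ hqball
    rw [starProd] at hval
    by_cases hfq : f (slicePt I' x y) = 0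
    · rw [if_pos hfq] at hval
      exact ⟨I, hI, by rw [hval, norm_zero]; positivity⟩
    · rw [if_neg hfq] at hval
      obtain ⟨I'', hI'', hq''⟩ := conj_pt_slice hI hfq hI' x y
      have hxy' : x ^ 2 + |y| ^ 2 < 1 := by rw [sq_abs]; exact hxy
      obtain ⟨I₃, hI₃, hle3⟩ :=
        bound_fc_sphere hI hJ hIJ hregf hfc hsplit hfcsplit hI'' hxy'
      refine ⟨I₃, hI₃, ?_⟩
      rw [hval, norm_mul, hq'']
      exact mul_le_mul_of_nonneg_left hle3 (norm_nonneg _)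
  by_cases hptop : p = ⊤
  · -- the sup-norm case
    subst hptop
    have hmain : hardyNorm fs ⊤ ≤ hardyNorm f ⊤ ^ 2 := by
      rw [hardyNorm]
      apply iSup₂_le
      intro I' hI'
      rw [sliceNormE, if_pos rfl]
      apply iSup₂_le
      rintro ⟨x, y⟩ hw
      obtain ⟨I₃, hI₃, hle⟩ := hbfs2 I' hI' x y hw
      have h1 : ENNReal.ofReal ‖fs (slicePt I' x y)‖
          ≤ ENNReal.ofReal (‖f (slicePt I' x y)‖ * ‖f (slicePt I₃ x |y|)‖) :=
        ENNReal.ofReal_le_ofReal hle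
      rw [ENNReal.ofReal_mul (norm_nonneg _)] at h1
      have h2 := le_hardyTop f hI' hw
      have h3 := le_hardyTop f hI₃ (x := x) (y := |y|) (by rw [sq_abs]; exact hw)
      calc ENNReal.ofReal ‖fs (slicePt I' x y)‖
          ≤ _ := h1
        _ ≤ hardyNorm f ⊤ * hardyNorm f ⊤ := mul_le_mul' h2 h3
        _ = hardyNorm f ⊤ ^ 2 := (sq _).symm
    have hdiv : (⊤ : ℝ≥0∞) / 2 = ⊤ :=
      ENNReal.div_eq_top.2 (Or.inr ⟨rfl, by norm_num⟩)
    refine ⟨?_, fun _ => hmain⟩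
    rw [hdiv]
    exact lt_of_le_of_lt hmain (ENNReal.pow_lt_top hfin')
  · -- the finite p case
    set s := p.toReal with hs_def
    have hs : 0 < s := ENNReal.toReal_pos hp.ne' hptop
    -- the coarse pointwise bound
    have hbfs1 : ∀ I' ∈ QSphere, ∀ x y : ℝ, x ^ 2 + y ^ 2 < 1 →
        ‖fs (slicePt I' x y)‖ ≤ (‖f (slicePt I x y)‖ + ‖f (slicePt I x (-y))‖)
          * (‖f (slicePt I x y)‖ + ‖f (slicePt I x (-y))‖) := by
      intro I' hI' x y hxy
      have hqball : slicePt I' x y ∈ QBall := slicePt_mem_ball hI' hxy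
      have hval := hfsdef _ hqball
      rw [starProd] at hval
      by_cases hfq : f (slicePt I' x y) = 0
      · rw [if_pos hfq] at hval
        rw [hval, norm_zero]
        positivity
      · rw [if_neg hfq] at hval
        obtain ⟨I'', hI'', hq''⟩ := conj_pt_slice hI hfq hI' x y
        have hxy' : x ^ 2 + |y| ^ 2 < 1 := by rw [sq_abs]; exact hxy
        have hb1 : ‖f (slicePt I' x y)‖
            ≤ ‖f (slicePt I x y)‖ + ‖f (slicePt I x (-y))‖ := bound_f hregf hI hI' hxy
        have hb2 : ‖fc (slicePt I'' x |y|)‖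
            ≤ ‖f (slicePt I x y)‖ + ‖f (slicePt I x (-y))‖ := by
          have h0 := bound_fc hI hJ hIJ hregf hfc hsplit hfcsplit hI'' hxy'
          rcases abs_cases y with ⟨h1, _⟩ | ⟨h1, _⟩
          · rw [h1] at h0 ⊢
            exact h0
          · rw [h1] at h0 ⊢
            rw [neg_neg] at h0
            linarith
        rw [hval, norm_mul, hq'']
        exact mul_le_mul hb1 hb2 (norm_nonneg _) (by positivity)
    -- main slice integral estimate
    set t : ℝ := s / 2 with ht_def
    have ht0 : 0 < t := by positivity
    set Creal : ℝ := ((2:ℝ) ^ (s + 1)) ^ (1 / t) with hC_def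
    have hCreal0 : 0 ≤ Creal := by positivity
    have hMp : ∀ I' ∈ QSphere, ∀ r ∈ Set.Ico (0:ℝ) 1,
        sliceMp fs I' t r ≤ ENNReal.ofReal Creal * hardyNorm f p ^ 2 := by
      intro I' hI' r hr
      set gI : ℝ → ℝ := fun θ => ‖f (circlePt I r θ)‖ with hgI
      set gS : ℝ → ℝ := fun θ => ‖fs (circlePt I' r θ)‖ with hgS
      have hcf : Continuous gI := (cont_circle hregf hI hr).norm
      have hcfs : Continuous gS := (cont_circle hfs hI' hr).norm
      have hptbd : ∀ θ : ℝ, gS θ ^ t ≤ 2 ^ s * (gI θ ^ s + gI (-θ) ^ s) := by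
        intro θ
        have hxy := circle_in_disc hr θ
        have h1 := hbfs1 I' hI' (r * Real.cos θ) (r * Real.sin θ) hxy
        have hneg : circlePt I r (-θ) = slicePt I (r * Real.cos θ) (-(r * Real.sin θ)) := by
          rw [circlePt, Real.cos_neg, Real.sin_neg, mul_neg]
        have h2 : gS θ ≤ (gI θ + gI (-θ)) * (gI θ + gI (-θ)) := by
          rw [hgS, hgI]
          simp only
          rw [hneg]
          exact h1
        have hΦ0 : (0:ℝ) ≤ gI θ + gI (-θ) := by
          simp only [hgI]
          positivity
        calc gS θ ^ t ≤ ((gI θ + gI (-θ)) * (gI θ + gI (-θ))) ^ t :=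
              Real.rpow_le_rpow (norm_nonneg _) h2 ht0.le
          _ = (gI θ + gI (-θ)) ^ s := by
              rw [← sq (gI θ + gI (-θ)), ← Real.rpow_natCast (gI θ + gI (-θ)) 2,
                ← Real.rpow_mul hΦ0]
              congr 1
              rw [ht_def]
              ring
          _ ≤ 2 ^ s * (gI θ ^ s + gI (-θ) ^ s) :=
              add_rpow_le _ _ _ (norm_nonneg _) (norm_nonneg _) (le_of_lt hs)
      have h2pi : (0:ℝ) ≤ 2 * Real.pi := by positivity
      set K : ℝ := ∫ θ in (0:ℝ)..(2 * Real.pi), gI θ ^ s with hK_def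
      have hKnonneg : 0 ≤ K := by
        rw [hK_def]
        apply intervalIntegral.integral_nonneg h2pi
        intro θ _
        simp only [hgI]
        positivity
      have hcont1 : Continuous fun θ => gS θ ^ t :=
        hcfs.rpow_const (fun θ => Or.inr ht0.le)
      have hcont2a : Continuous fun θ => gI θ ^ s :=
        hcf.rpow_const (fun θ => Or.inr hs.le)
      have hcont2b : Continuous fun θ => gI (-θ) ^ s :=
        (hcf.comp continuous_neg).rpow_const (fun θ => Or.inr hs.le)
      have hint1 : IntervalIntegrable (fun θ => gS θ ^ t) MeasureTheory.volume 0 (2 * Real.pi) :=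
        hcont1.intervalIntegrable _ _
      have hint2a : IntervalIntegrable (fun θ => gI θ ^ s) MeasureTheory.volume 0 (2 * Real.pi) :=
        hcont2a.intervalIntegrable _ _
      have hint2b : IntervalIntegrable (fun θ => gI (-θ) ^ s)
          MeasureTheory.volume 0 (2 * Real.pi) := hcont2b.intervalIntegrable _ _
      have hint2 : IntervalIntegrable (fun θ => 2 ^ s * (gI θ ^ s + gI (-θ) ^ s))
          MeasureTheory.volume 0 (2 * Real.pi) := ((hint2a.add hint2b).const_mul _)
      have hKneg : (∫ θ in (0:ℝ)..(2 * Real.pi), gI (-θ) ^ s) = K := by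
        have hper : Function.Periodic (fun θ => gI θ ^ s) (2 * Real.pi) := by
          intro θ
          have : circlePt I r (θ + 2 * Real.pi) = circlePt I r θ := by
            rw [circlePt, circlePt, Real.cos_add_two_pi, Real.sin_add_two_pi]
          simp only [hgI, this]
        have h1 : (∫ θ in (0:ℝ)..(2 * Real.pi), gI (-θ) ^ s)
            = ∫ θ in (-(2 * Real.pi))..(0:ℝ), gI θ ^ s := by
          have := intervalIntegral.integral_comp_neg (fun θ => gI θ ^ s)
            (a := 0) (b := 2 * Real.pi)
          simpa using this
        rw [h1, hK_def]
        have h2 := hper.intervalIntegral_add_eq (-(2 * Real.pi)) 0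
        simpa using h2
      have hIb : (∫ θ in (0:ℝ)..(2 * Real.pi), gS θ ^ t) ≤ 2 ^ s * (K + K) := by
        have hmono := intervalIntegral.integral_mono_on h2pi hint1 hint2
          (fun θ _ => hptbd θ)
        rwa [intervalIntegral.integral_const_mul,
          intervalIntegral.integral_add hint2a hint2b, hKneg, hK_def] at hmono
      -- now the real-number chain
      have hc2π : (0:ℝ) ≤ 1 / (2 * Real.pi) := by positivity
      set M : ℝ := (1 / (2 * Real.pi) * K) ^ (1 / s) with hM_def
      have hM0 : 0 ≤ M := Real.rpow_nonneg (by positivity) _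
      have hchain : (1 / (2 * Real.pi) * ∫ θ in (0:ℝ)..(2 * Real.pi), gS θ ^ t) ^ (1 / t)
          ≤ Creal * M ^ 2 := by
        have hstep1 : (1 / (2 * Real.pi) * ∫ θ in (0:ℝ)..(2 * Real.pi), gS θ ^ t) ^ (1 / t)
            ≤ ((2:ℝ) ^ (s + 1) * (1 / (2 * Real.pi) * K)) ^ (1 / t) := by
          apply Real.rpow_le_rpow
          · apply mul_nonneg hc2π
            apply intervalIntegral.integral_nonneg h2pi
            intro θ _
            simp only [hgS]
            positivity
          · calc 1 / (2 * Real.pi) * ∫ θ in (0:ℝ)..(2 * Real.pi), gS θ ^ t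
                ≤ 1 / (2 * Real.pi) * (2 ^ s * (K + K)) :=
                  mul_le_mul_of_nonneg_left hIb hc2π
              _ = (2:ℝ) ^ (s + 1) * (1 / (2 * Real.pi) * K) := by
                  rw [Real.rpow_add (by norm_num : (0:ℝ) < 2), Real.rpow_one]
                  ring
          · positivity
        have hstep2 : ((2:ℝ) ^ (s + 1) * (1 / (2 * Real.pi) * K)) ^ (1 / t)
            = Creal * M ^ 2 := by
          rw [Real.mul_rpow (by positivity) (by positivity), hC_def, hM_def]
          congr 1
          rw [← Real.rpow_natCast ((1 / (2 * Real.pi) * K) ^ (1 / s)) 2,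
            ← Real.rpow_mul (by positivity)]
          congr 1
          rw [ht_def]
          field_simp
          norm_num
        rw [hstep2] at hstep1
        exact hstep1
      -- to ENNReal
      have hMle : ENNReal.ofReal M ≤ hardyNorm f p := by
        have := le_hardyFin f hI hptop hr
        rw [← hs_def] at this
        exact this
      calc sliceMp fs I' t r
          = ENNReal.ofReal
            ((1 / (2 * Real.pi) * ∫ θ in (0:ℝ)..(2 * Real.pi), gS θ ^ t) ^ (1 / t)) := rfl
        _ ≤ ENNReal.ofReal (Creal * M ^ 2) := ENNReal.ofReal_le_ofReal hchain
        _ = ENNReal.ofReal Creal * ENNReal.ofReal M ^ 2 := by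
            rw [ENNReal.ofReal_mul hCreal0, ENNReal.ofReal_pow hM0]
        _ ≤ ENNReal.ofReal Creal * hardyNorm f p ^ 2 :=
            mul_le_mul_right (pow_le_pow_left' hMle 2) _
    have hp2 : p / 2 ≠ ⊤ := by
      intro h
      rcases ENNReal.div_eq_top.1 h with ⟨_, h2⟩ | ⟨h1, _⟩
      · norm_num at h2
      · exact hptop h1
    have htt : (p / 2).toReal = t := by
      rw [ENNReal.toReal_div, ht_def, hs_def]
      norm_num
    have hnorm : hardyNorm fs (p / 2) ≤ ENNReal.ofReal Creal * hardyNorm f p ^ 2 := by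
      rw [hardyNorm]
      apply iSup₂_le
      intro I' hI'
      rw [sliceNormE, if_neg hp2, htt, sliceNorm]
      apply iSup₂_le
      intro r hr
      exact hMp I' hI' r hr
    refine ⟨lt_of_le_of_lt hnorm ?_, fun h => absurd h hptop⟩
    exact ENNReal.mul_lt_top ENNReal.ofReal_lt_top (ENNReal.pow_lt_top hfin')
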